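/- arXiv:1301.7166 — 4 statements merged into one kernel-verified Lean document; each statement's English description precedes it below -/
import Mathlib

section
/- If s(u_L - u_R) = (u_L²/2 - u_R²/2) - (σ_L - σ_R) and s(σ_L - σ_R) = ((u_L + u_R)/2)(σ_L - σ_R), with u_L ≠ u_R, then σ_L = σ_R. (Hence the Volpert product admits no genuine shock waves with a jump in σ for the limiting elastodynamics system.) -/
/-! In the frame of the shock, with relative speed `a = s - (u_L + u_R) / 2`, the two conditions
read `a (u_L - u_R) = σ_R - σ_L` and `a (σ_L - σ_R) = 0`. If `a = 0` the first forces the jump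
in `σ` to vanish, and otherwise the second does. -/

theorem eq_zero_of_mul_eq_of_mul_eq_zero {R : Type*} [MulZeroClass R] [NoZeroDivisors R]
    {a x d : R} (hx : a * x = d) (hd : a * d = 0) : d = 0 := by
  rcases mul_eq_zero.1 hd with ha | hd
  · rw [← hx, ha, zero_mul]
  · exact hd

theorem volpert_no_shock_general (uL uR σL σR s : ℝ)
    (h1 : s * (uL - uR) = (uL ^ 2 / 2 - uR ^ 2 / 2) - (σL - σR))
    (h2 : s * (σL - σR) = ((uL + uR) / 2) * (σL - σR)) :
    σL = σR := by
  set a := s - (uL + uR) / 2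
  have h1' : a * (uR - uL) = σL - σR := by linear_combination -h1
  have h2' : a * (σL - σR) = 0 := by linear_combination h2
  exact sub_eq_zero.1 (eq_zero_of_mul_eq_of_mul_eq_zero h1' h2')

/-- Volpert's product admits no shock waves with a jump in σ for the limiting
elastodynamics system: the Rankine–Hugoniot relations force σ_L = σ_R. -/
theorem volpert_no_shock (uL uR σL σR s : ℝ) (hu : uL ≠ uR)
    (h1 : s * (uL - uR) = (uL ^ 2 / 2 - uR ^ 2 / 2) - (σL - σR))
    (h2 : s * (σL - σR) = ((uL + uR) / 2) * (σL - σR)) :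
    σL = σR :=
  volpert_no_shock_general uL uR σL σR s h1 h2
end

section
/- Let φ₁, φ₂ : [0,1] → ℝ be Lipschitz paths with φ₁(0) = u_L, φ₁(1) = u_R, φ₂(0) = σ_L, φ₂(1) = σ_R, u_L ≠ u_R, and k > 0. Then the DLM Rankine-Hugoniot conditions ∫₀¹ (-s + φ₁)φ₁' - φ₂' dt = 0 and ∫₀¹ (-k² φ₁' + (-s + φ₁)φ₂') dt = 0 hold if and only if s = ((u_R²-u_L²)/2 - (σ_R-σ_L))/(u_R-u_L) and ∫₀¹ φ₁(t) φ₂'(t) dt = (σ_R-σ_L)·s + k²(u_R-u_L). -/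
open intervalIntegral

/-!
Lipschitz paths are absolutely continuous, so the fundamental theorem of calculus applies to
`φ₁`, `φ₂` and `φ₁ ^ 2 / 2`. Every integral in the two conditions is then a function of the end
states, except `∫ φ₁ φ₂'`, which occurs only in the second one. The first condition is thus linear
in `s` with coefficient `u_R - u_L ≠ 0`, and the second condition solves for `∫ φ₁ φ₂'`.
-/

namespace AbsolutelyContinuousOnInterval

variable {f g : ℝ → ℝ} {a b : ℝ}

theorem integral_mul_deriv_self (hf : AbsolutelyContinuousOnInterval f a b) :
    ∫ x in a..b, f x * deriv f x = (f b ^ 2 - f a ^ 2) / 2 := by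
  have h := hf.integral_mul_deriv_eq_deriv_mul hf
  simp only [mul_comm (deriv f _)] at h
  linarith

theorem integral_neg_add_mul_deriv_sub_deriv (hf : AbsolutelyContinuousOnInterval f a b)
    (hg : AbsolutelyContinuousOnInterval g a b) (s : ℝ) :
    ∫ x in a..b, ((-s + f x) * deriv f x - deriv g x)
      = -s * (f b - f a) + (f b ^ 2 - f a ^ 2) / 2 - (g b - g a) := by
  have hf' := hf.intervalIntegrable_deriv
  have hff' := hf'.continuousOn_mul hf.continuousOn
  simp only [add_mul]
  rw [integral_sub ((hf'.const_mul _).add hff') hg.intervalIntegrable_deriv,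
    integral_add (hf'.const_mul _) hff', integral_const_mul, hf.integral_deriv_eq_sub,
    hf.integral_mul_deriv_self, hg.integral_deriv_eq_sub]

theorem integral_const_mul_deriv_add_neg_add_mul_deriv
    (hf : AbsolutelyContinuousOnInterval f a b) (hg : AbsolutelyContinuousOnInterval g a b)
    (c s : ℝ) :
    ∫ x in a..b, (c * deriv f x + (-s + f x) * deriv g x)
      = c * (f b - f a) - s * (g b - g a) + ∫ x in a..b, f x * deriv g x := by
  have hg' := hg.intervalIntegrable_deriv
  have hfg' := hg'.continuousOn_mul hf.continuousOn
  simp only [add_mul]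
  rw [integral_add (hf.intervalIntegrable_deriv.const_mul _) ((hg'.const_mul _).add hfg'),
    integral_add (hg'.const_mul _) hfg', integral_const_mul, integral_const_mul,
    hf.integral_deriv_eq_sub, hg.integral_deriv_eq_sub]
  ring

end AbsolutelyContinuousOnInterval

theorem rankineHugoniot_elastodynamics_iff {uL uR σL σR s c P : ℝ} (hu : uL ≠ uR) :
    (-s * (uR - uL) + (uR ^ 2 - uL ^ 2) / 2 - (σR - σL) = 0 ∧
      -c * (uR - uL) - s * (σR - σL) + P = 0)
    ↔ (s = ((uR ^ 2 - uL ^ 2) / 2 - (σR - σL)) / (uR - uL) ∧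
      P = (σR - σL) * s + c * (uR - uL)) := by
  have hΔ : uR - uL ≠ 0 := sub_ne_zero.mpr hu.symm
  rw [eq_div_iff hΔ]
  constructor <;> rintro ⟨h₁, h₂⟩ <;> constructor <;> linarith

theorem DLM_RH_elastodynamics_system_general
    (uL uR σL σR s k : ℝ) (φ₁ φ₂ : ℝ → ℝ) (K₁ K₂ : NNReal)
    (hLip₁ : LipschitzOnWith K₁ φ₁ (Set.Icc 0 1))
    (hLip₂ : LipschitzOnWith K₂ φ₂ (Set.Icc 0 1))
    (h₁0 : φ₁ 0 = uL) (h₁1 : φ₁ 1 = uR)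
    (h₂0 : φ₂ 0 = σL) (h₂1 : φ₂ 1 = σR)
    (hu : uL ≠ uR) :
    ((∫ t in (0:ℝ)..1, ((-s + φ₁ t) * deriv φ₁ t - deriv φ₂ t)) = 0 ∧
     (∫ t in (0:ℝ)..1, (-k ^ 2 * deriv φ₁ t + (-s + φ₁ t) * deriv φ₂ t)) = 0)
    ↔ (s = ((uR ^ 2 - uL ^ 2) / 2 - (σR - σL)) / (uR - uL) ∧
       (∫ t in (0:ℝ)..1, φ₁ t * deriv φ₂ t)
          = (σR - σL) * s + k ^ 2 * (uR - uL)) := by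
  rw [← Set.uIcc_of_le zero_le_one] at hLip₁ hLip₂
  have hφ₁ := hLip₁.absolutelyContinuousOnInterval
  have hφ₂ := hLip₂.absolutelyContinuousOnInterval
  rw [hφ₁.integral_neg_add_mul_deriv_sub_deriv hφ₂,
    hφ₁.integral_const_mul_deriv_add_neg_add_mul_deriv hφ₂, h₁0, h₁1, h₂0, h₂1]
  exact rankineHugoniot_elastodynamics_iff hu

/-- DLM Rankine–Hugoniot conditions for the elastodynamics system with
elasticity constant k > 0: the two integral conditions hold iff s is the
shock speed and the path satisfies condition (2.8). -/
theorem DLM_RH_elastodynamics_system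
    (uL uR σL σR s k : ℝ) (φ₁ φ₂ : ℝ → ℝ) (K₁ K₂ : NNReal)
    (hLip₁ : LipschitzOnWith K₁ φ₁ (Set.Icc 0 1))
    (hLip₂ : LipschitzOnWith K₂ φ₂ (Set.Icc 0 1))
    (h₁0 : φ₁ 0 = uL) (h₁1 : φ₁ 1 = uR)
    (h₂0 : φ₂ 0 = σL) (h₂1 : φ₂ 1 = σR)
    (hu : uL ≠ uR) (hk : 0 < k) :
    ((∫ t in (0:ℝ)..1, ((-s + φ₁ t) * deriv φ₁ t - deriv φ₂ t)) = 0 ∧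
     (∫ t in (0:ℝ)..1, (-k ^ 2 * deriv φ₁ t + (-s + φ₁ t) * deriv φ₂ t)) = 0)
    ↔ (s = ((uR ^ 2 - uL ^ 2) / 2 - (σR - σL)) / (uR - uL) ∧
       (∫ t in (0:ℝ)..1, φ₁ t * deriv φ₂ t)
          = (σR - σL) * s + k ^ 2 * (uR - uL)) :=
  DLM_RH_elastodynamics_system_general uL uR σL σR s k φ₁ φ₂ K₁ K₂ hLip₁ hLip₂ h₁0 h₁1 h₂0 h₂1 hu
end

section
/- With φ₁ piecewise linear as: φ₁(t) = u_L + 2t(u_R - u_L) on [0,1/2], φ₁(t) = u_R on [1/2,1], and φ₂(t) = σ_L + t(σ_R - σ_L), the condition ∫₀¹ φ₁ φ₂' dt = [σ]·([u²/2]-[σ])/[u] + k²[u] (where [w] = w_R - w_L, u_L ≠ u_R) holds if and only if [σ] satisfies 4[σ]² + (u_R - u_L)²[σ] - 4k²(u_R - u_L)² = 0. -/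
/-!
Since φ₂ is affine, φ₂' ≡ [σ] and the integral is [σ] ∫₀¹ φ₁ = [σ] (u_L + 3 u_R) / 4.
Multiplying condition (2.8) by 4 [u] ≠ 0 turns it into the stated quadratic in [σ].
-/

open intervalIntegral

lemma integral_ramp_half (a b : ℝ) :
    ∫ t in (0:ℝ)..(1/2), (a + 2 * t * (b - a)) = a / 2 + (b - a) / 4 := by
  have hramp : IntervalIntegrable (fun t : ℝ => 2 * t * (b - a)) MeasureTheory.volume 0 (1/2) :=
    (by fun_prop : Continuous fun t : ℝ => 2 * t * (b - a)).intervalIntegrable _ _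
  rw [integral_add intervalIntegrable_const hramp, integral_mul_const, integral_const_mul]
  norm_num
  ring

lemma integral_ramp_then_const (uL uR : ℝ) (φ : ℝ → ℝ)
    (hramp : ∀ t ∈ Set.Icc (0:ℝ) (1/2), φ t = uL + 2 * t * (uR - uL))
    (hconst : ∀ t ∈ Set.Icc (1/2:ℝ) 1, φ t = uR) :
    ∫ t in (0:ℝ)..1, φ t = (uL + 3 * uR) / 4 := by
  have hramp' : Set.EqOn φ (fun t => uL + 2 * t * (uR - uL)) (Set.uIcc 0 (1/2)) := by
    rw [Set.uIcc_of_le (by norm_num)]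
    exact hramp
  have hconst' : Set.EqOn φ (fun _ => uR) (Set.uIcc (1/2) 1) := by
    rw [Set.uIcc_of_le (by norm_num)]
    exact hconst
  have hint₁ : IntervalIntegrable φ MeasureTheory.volume 0 (1/2) :=
    ((by fun_prop : Continuous fun t : ℝ => uL + 2 * t * (uR - uL)).continuousOn.congr
      hramp').intervalIntegrable
  have hint₂ : IntervalIntegrable φ MeasureTheory.volume (1/2) 1 :=
    (continuousOn_const.congr hconst').intervalIntegrable
  rw [← integral_add_adjacent_intervals hint₁ hint₂, integral_congr hramp', integral_congr hconst',
    integral_ramp_half, integral_const]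
  norm_num
  ring

lemma deriv_of_affine (a b : ℝ) (f : ℝ → ℝ) (hf : ∀ t, f t = a + t * b) (t : ℝ) :
    deriv f t = b := by
  rw [funext hf]
  simp

lemma condition_iff_quadratic (uL uR s k : ℝ) (hu : uL ≠ uR) :
    (uL + 3 * uR) / 4 * s = s * (((uR ^ 2 - uL ^ 2) / 2 - s) / (uR - uL)) + k ^ 2 * (uR - uL)
      ↔ 4 * s ^ 2 + (uR - uL) ^ 2 * s - 4 * k ^ 2 * (uR - uL) ^ 2 = 0 := by
  have hΔ : uR - uL ≠ 0 := sub_ne_zero.mpr hu.symm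
  have hscaled : ((uL + 3 * uR) / 4 * s
      - (s * (((uR ^ 2 - uL ^ 2) / 2 - s) / (uR - uL)) + k ^ 2 * (uR - uL))) * (4 * (uR - uL))
      = 4 * s ^ 2 + (uR - uL) ^ 2 * s - 4 * k ^ 2 * (uR - uL) ^ 2 := by
    field_simp
    ring
  rw [← sub_eq_zero, ← hscaled, mul_eq_zero, or_iff_left (mul_ne_zero four_ne_zero hΔ)]

/-- For the DLM path (2.1), condition (2.8) for the elastodynamics system
with constant k holds iff the jump [σ] = σ_R - σ_L satisfies the quadratic
4[σ]² + (u_R - u_L)²[σ] - 4k²(u_R - u_L)² = 0. -/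
theorem path_phi_condition_iff_quadratic
    (uL uR σL σR k : ℝ) (hu : uL ≠ uR)
    (φ₁ φ₂ : ℝ → ℝ)
    (hφ₁ : ∀ t ∈ Set.Icc (0:ℝ) (1/2), φ₁ t = uL + 2 * t * (uR - uL))
    (hφ₁' : ∀ t ∈ Set.Icc (1/2:ℝ) 1, φ₁ t = uR)
    (hφ₂ : ∀ t : ℝ, φ₂ t = σL + t * (σR - σL)) :
    ((∫ t in (0:ℝ)..1, φ₁ t * deriv φ₂ t)
        = (σR - σL) * (((uR ^ 2 - uL ^ 2) / 2 - (σR - σL)) / (uR - uL))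
            + k ^ 2 * (uR - uL))
    ↔ 4 * (σR - σL) ^ 2 + (uR - uL) ^ 2 * (σR - σL)
        - 4 * k ^ 2 * (uR - uL) ^ 2 = 0 := by
  simp_rw [deriv_of_affine σL (σR - σL) φ₂ hφ₂, integral_mul_const,
    integral_ramp_then_const uL uR φ₁ hφ₁ hφ₁']
  exact condition_iff_quadratic uL uR (σR - σL) k hu
end

section
/- Define φ̃₁(t) = u_L + 2t(u_R - u_L) on [0,1/2], φ̃₁(t) = u_R on [1/2,1]; φ̃₂(t) = σ_L on [0,1/2], φ̃₂(t) = σ_L + (2t-1)(σ_R - σ_L) on [1/2,1]. If u_R ≠ u_L and σ_R - σ_L = -(1/2)(u_R - u_L)², then ∫₀¹ φ̃₁(t) φ̃₂'(t) dt = (σ_R - σ_L)·((u_R²-u_L²)/2 - (σ_R-σ_L))/(u_R-u_L). -/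
/-!
Since `φ₂` is constant on `(0, 1/2)`, only the second half of the path contributes: there
`φ₁ = uR` and `φ₂' = 2 (σR - σL)`, so the integral is `uR (σR - σL)`. On the shock curve
`(uR² - uL²)/2 - (σR - σL) = uR (uR - uL)`, which turns the right-hand side into the same value.
-/

open intervalIntegral MeasureTheory Set

section PiecewiseConstant

variable {E : Type*} [NormedAddCommGroup E] {f : ℝ → E} {a b : ℝ} {c : E}

theorem intervalIntegrable_of_eqOn_Ioo_const (hab : a ≤ b) (h : EqOn f (fun _ => c) (Ioo a b)) :
    IntervalIntegrable f volume a b :=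
  intervalIntegrable_const.congr_uIoo (uIoo_of_le hab ▸ h.symm)

theorem integral_of_eqOn_Ioo_const [NormedSpace ℝ E] [CompleteSpace E] (hab : a ≤ b)
    (h : EqOn f (fun _ => c) (Ioo a b)) :
    ∫ x in a..b, f x = (b - a) • c := by
  rw [integral_congr_Ioo_of_le hab h, intervalIntegral.integral_const]

end PiecewiseConstant

section MulDeriv

variable {𝕜 : Type*} [NontriviallyNormedField 𝕜] {φ : 𝕜 → 𝕜} {s : Set 𝕜} {c m k : 𝕜}

theorem eqOn_mul_deriv_of_eqOn_const (g : 𝕜 → 𝕜) (hs : IsOpen s)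
    (hφ : EqOn φ (fun _ => k) s) : EqOn (fun t => g t * deriv φ t) (fun _ => 0) s := by
  intro t ht
  simp only [hφ.deriv hs ht, deriv_const, mul_zero]

theorem eqOn_mul_deriv_of_eqOn_affine {g : 𝕜 → 𝕜} (hs : IsOpen s) (hg : EqOn g (fun _ => c) s)
    (hφ : EqOn φ (fun t => m * t + k) s) : EqOn (fun t => g t * deriv φ t) (fun _ => c * m) s := by
  intro t ht
  simp [hg ht, hφ.deriv hs ht]

end MulDeriv

theorem path_phi_tilde_shock_curve_limiting_general
    (uL uR σL σR : ℝ) (hu : uR ≠ uL)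
    (hS : σR - σL = -(1 / 2) * (uR - uL) ^ 2)
    (φ₁ φ₂ : ℝ → ℝ)
    (hφ₁' : ∀ t ∈ Set.Icc (1/2:ℝ) 1, φ₁ t = uR)
    (hφ₂ : ∀ t ∈ Set.Icc (0:ℝ) (1/2), φ₂ t = σL)
    (hφ₂' : ∀ t ∈ Set.Icc (1/2:ℝ) 1, φ₂ t = σL + (2 * t - 1) * (σR - σL)) :
    (∫ t in (0:ℝ)..1, φ₁ t * deriv φ₂ t)
      = (σR - σL) * (((uR ^ 2 - uL ^ 2) / 2 - (σR - σL)) / (uR - uL)) := by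
  have hleft := eqOn_mul_deriv_of_eqOn_const φ₁ isOpen_Ioo (EqOn.mono Ioo_subset_Icc_self hφ₂)
  have hright := eqOn_mul_deriv_of_eqOn_affine (m := 2 * (σR - σL)) (k := σL - (σR - σL))
    isOpen_Ioo (EqOn.mono Ioo_subset_Icc_self hφ₁')
    fun t ht => (hφ₂' t (Ioo_subset_Icc_self ht)).trans (by ring)
  have half_le_one : (1 / 2 : ℝ) ≤ 1 := by norm_num
  have zero_le_half : (0 : ℝ) ≤ 1 / 2 := by norm_num
  rw [← integral_add_adjacent_intervals (intervalIntegrable_of_eqOn_Ioo_const zero_le_half hleft)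
      (intervalIntegrable_of_eqOn_Ioo_const half_le_one hright),
    integral_of_eqOn_Ioo_const zero_le_half hleft, integral_of_eqOn_Ioo_const half_le_one hright]
  have hbracket : (uR ^ 2 - uL ^ 2) / 2 - (σR - σL) = uR * (uR - uL) := by
    linear_combination -hS
  rw [hbracket, mul_div_cancel_right₀ _ (sub_ne_zero.mpr hu), smul_eq_mul, smul_eq_mul]
  ring

/-- The DLM path (2.2) gives a shock-wave solution for the limiting system:
if (u_R, σ_R) lies on the shock curve S₁ : σ = σ_L - (1/2)(u - u_L)², then
condition (2.5) is satisfied. -/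
theorem path_phi_tilde_shock_curve_limiting
    (uL uR σL σR : ℝ) (hu : uR ≠ uL)
    (hS : σR - σL = -(1 / 2) * (uR - uL) ^ 2)
    (φ₁ φ₂ : ℝ → ℝ)
    (hφ₁ : ∀ t ∈ Set.Icc (0:ℝ) (1/2), φ₁ t = uL + 2 * t * (uR - uL))
    (hφ₁' : ∀ t ∈ Set.Icc (1/2:ℝ) 1, φ₁ t = uR)
    (hφ₂ : ∀ t ∈ Set.Icc (0:ℝ) (1/2), φ₂ t = σL)
    (hφ₂' : ∀ t ∈ Set.Icc (1/2:ℝ) 1, φ₂ t = σL + (2 * t - 1) * (σR - σL)) :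
    (∫ t in (0:ℝ)..1, φ₁ t * deriv φ₂ t)
      = (σR - σL) * (((uR ^ 2 - uL ^ 2) / 2 - (σR - σL)) / (uR - uL)) :=
  path_phi_tilde_shock_curve_limiting_general uL uR σL σR hu hS φ₁ φ₂ hφ₁' hφ₂ hφ₂'
end
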